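/- Fix an integer d ≥ 1, p ∈ (0,1), τ > 0, and let (f̃_j)_{j∈ℤ^d} be a bounded family of complex numbers satisfying conj(f̃_j) = f̃_{−j} for all j (so that f(x) = Σ_{j∈ℤ^d} f̃_j ψ_j(x) is real-valued). Then for every x ∈ ℝ^d the double family (ψ_i^*(x) ψ_j(x) (c_{i,j−i} + c_{j,i−j}) f̃_{j−i})_{(i,j)∈ℤ^d×ℤ^d} is absolutely summable and f(x) = (1/(2κ̃)) Σ_{(i,j)∈ℤ^d×ℤ^d} ψ_i^*(x) ψ_j(x) (c_{i,j−i} + c_{j,i−j}) f̃_{j−i}. -/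

import Mathlib

/-!
With `a_k = e^{-τ|k|_p}` (`expWeight d p τ k`), the structure constants are designed so that
`ψ_i^* ψ_j (c_{i,j-i} + c_{j,i-j}) = (a_i + a_j) ψ_{j-i}`. Substituting `k = j - i`, each half of
the double sum becomes a product of two absolutely convergent series, `Σ_i a_i · Σ_k f̃_k ψ_k`,
and `Σ_i a_i = κ̃`. Absolute convergence comes from the stretched-exponential decay of
`e^{-c|k|_p}`, which beats `|k|^{-2}` in every coordinate.
-/

noncomputable section

namespace QECD

/-- `|j|_p = |j_1|^p + … + |j_d|^p` for a multi-index `j ∈ ℤ^d`. -/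
def normP (d : ℕ) (p : ℝ) (j : Fin d → ℤ) : ℝ := ∑ i, |((j i : ℝ))| ^ p

/-- `ψ_j(x) = e^{−τ|j|_p/2} e^{i j·x}` on the `d`-torus. -/
def psiD (d : ℕ) (p τ : ℝ) (j : Fin d → ℤ) (x : Fin d → ℝ) : ℂ :=
  (Real.exp (-(τ * normP d p j) / 2) : ℂ) *
    Complex.exp (Complex.I * ((∑ i, (j i : ℝ) * x i : ℝ) : ℂ))

/-- Structure constants `c_{jl} = e^{−τ(|j|_p + |l|_p − |j+l|_p)/2}`. -/
def cstD (d : ℕ) (p τ : ℝ) (j l : Fin d → ℤ) : ℝ :=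
  Real.exp (-(τ * (normP d p j + normP d p l - normP d p (j + l))) / 2)

/-- `κ̃ = Σ_{j∈ℤ^d} e^{−τ|j|_p}`. -/
def kapTilde (d : ℕ) (p τ : ℝ) : ℝ := ∑' j : Fin d → ℤ, Real.exp (-(τ * normP d p j))

section ShearedProducts

variable {G R : Type*} [AddCommGroup G] [NormedRing R] {f g : G → R}

lemma summable_norm_mul_comp_sub_left (hf : Summable (‖f ·‖)) (hg : Summable (‖g ·‖)) :
    Summable fun q : G × G => ‖f q.1 * g (q.2 - q.1)‖ := by
  rw [← ((Equiv.refl G).prodShear Equiv.addLeft).summable_iff]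
  simpa [Function.comp_def] using hf.mul_norm hg

lemma tsum_mul_comp_sub_left [CompleteSpace R] (hf : Summable (‖f ·‖)) (hg : Summable (‖g ·‖)) :
    ∑' q : G × G, f q.1 * g (q.2 - q.1) = (∑' i, f i) * ∑' k, g k := by
  rw [tsum_mul_tsum_of_summable_norm hf hg,
    ← ((Equiv.refl G).prodShear Equiv.addLeft).tsum_eq]
  simp

lemma summable_norm_mul_comp_sub_right (hf : Summable (‖f ·‖)) (hg : Summable (‖g ·‖)) :
    Summable fun q : G × G => ‖f q.2 * g (q.2 - q.1)‖ := by
  rw [← (((Equiv.refl G).prodShear Equiv.subLeft).trans (Equiv.prodComm G G)).summable_iff]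
  simpa [Function.comp_def] using hf.mul_norm hg

lemma tsum_mul_comp_sub_right [CompleteSpace R] (hf : Summable (‖f ·‖)) (hg : Summable (‖g ·‖)) :
    ∑' q : G × G, f q.2 * g (q.2 - q.1) = (∑' i, f i) * ∑' k, g k := by
  rw [tsum_mul_tsum_of_summable_norm hf hg,
    ← (((Equiv.refl G).prodShear Equiv.subLeft).trans (Equiv.prodComm G G)).tsum_eq]
  simp

end ShearedProducts

lemma summable_exp_neg_mul_natCast_rpow {c p : ℝ} (hc : 0 < c) (hp : 0 < p) :
    Summable fun n : ℕ => Real.exp (-(c * (n : ℝ) ^ p)) := by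
  have hpow : Filter.Tendsto (fun n : ℕ => (n : ℝ) ^ p) Filter.atTop Filter.atTop :=
    (tendsto_rpow_atTop hp).comp tendsto_natCast_atTop_atTop
  have hdecay := ((isLittleO_exp_neg_mul_rpow_atTop hc (-2 / p)).comp_tendsto hpow).isBigO
  refine summable_of_isBigO_nat (Real.summable_nat_rpow.mpr (by norm_num : (-2 : ℝ) < -1)) ?_
  refine (hdecay.congr_left fun n => by simp [neg_mul]).congr_right fun n => ?_
  simp only [Function.comp_apply]
  rw [← Real.rpow_mul (Nat.cast_nonneg n), mul_div_cancel₀ _ hp.ne']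

lemma summable_exp_neg_mul_abs_intCast_rpow {c p : ℝ} (hc : 0 < c) (hp : 0 < p) :
    Summable fun n : ℤ => Real.exp (-(c * |(n : ℝ)| ^ p)) :=
  .of_nat_of_neg (by simpa using summable_exp_neg_mul_natCast_rpow hc hp)
    (by simpa using summable_exp_neg_mul_natCast_rpow hc hp)

def expWeight (d : ℕ) (p c : ℝ) (k : Fin d → ℤ) : ℝ := Real.exp (-(c * normP d p k))

lemma expWeight_pos {d : ℕ} {p c : ℝ} (k : Fin d → ℤ) : 0 < expWeight d p c k := Real.exp_pos _

lemma normP_cons {n : ℕ} (p : ℝ) (a : ℤ) (k : Fin n → ℤ) :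
    normP (n + 1) p (Fin.cons a k) = |(a : ℝ)| ^ p + normP n p k := by
  simp [normP, Fin.sum_univ_succ]

lemma normP_neg (d : ℕ) (p : ℝ) (k : Fin d → ℤ) : normP d p (-k) = normP d p k := by
  simp [normP]

lemma summable_expWeight (d : ℕ) {p c : ℝ} (hc : 0 < c) (hp : 0 < p) :
    Summable (expWeight d p c) := by
  induction d with
  | zero => exact .of_finite
  | succ n ih =>
    rw [← (Fin.consEquiv fun _ => ℤ).summable_iff]
    refine ((summable_exp_neg_mul_abs_intCast_rpow hc hp).mul_of_nonneg ih
      (fun _ => (Real.exp_pos _).le) fun k => (expWeight_pos k).le).congr fun q => ?_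
    simp [expWeight, Fin.consEquiv, normP_cons, mul_add, ← Real.exp_add, add_comm]

section FeatureMap

variable {d : ℕ} {p τ : ℝ}

lemma norm_psiD (k : Fin d → ℤ) (x : Fin d → ℝ) : ‖psiD d p τ k x‖ = expWeight d p (τ / 2) k := by
  rw [psiD, norm_mul, Complex.norm_exp_I_mul_ofReal, mul_one, Complex.norm_real,
    Real.norm_of_nonneg (Real.exp_pos _).le, expWeight]
  congr 1
  ring

lemma conj_psiD (k : Fin d → ℤ) (x : Fin d → ℝ) :
    (starRingEnd ℂ) (psiD d p τ k x) = psiD d p τ (-k) x := by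
  simp [psiD, normP_neg, ← Complex.exp_conj, -Complex.ofReal_exp]

lemma cstD_mul_conj_psiD_mul_psiD_add (i l : Fin d → ℤ) (x : Fin d → ℝ) :
    (cstD d p τ i l : ℂ) * ((starRingEnd ℂ) (psiD d p τ i x) * psiD d p τ (i + l) x)
      = expWeight d p τ i * psiD d p τ l x := by
  rw [conj_psiD]
  simp only [cstD, psiD, expWeight, normP_neg, Complex.ofReal_exp, ← Complex.exp_add]
  congr 1
  simp only [Pi.add_apply, Pi.neg_apply, Int.cast_add, Int.cast_neg, add_mul, neg_mul,
    Finset.sum_add_distrib, Finset.sum_neg_distrib]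
  push_cast
  ring

lemma conj_psiD_mul_psiD_mul_cstD (i j : Fin d → ℤ) (x : Fin d → ℝ) :
    (starRingEnd ℂ) (psiD d p τ i x) * psiD d p τ j x *
        ((cstD d p τ i (j - i) + cstD d p τ j (i - j) : ℝ) : ℂ)
      = ((expWeight d p τ i : ℂ) + expWeight d p τ j) * psiD d p τ (j - i) x := by
  have hi := cstD_mul_conj_psiD_mul_psiD_add (p := p) (τ := τ) i (j - i) x
  -- the second structure constant enters through the conjugate of the identity for `(j, i - j)`
  have hj := congrArg (starRingEnd ℂ)
    (cstD_mul_conj_psiD_mul_psiD_add (p := p) (τ := τ) j (i - j) x)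
  simp only [add_sub_cancel, map_mul, Complex.conj_ofReal, conj_psiD, neg_neg, neg_sub] at hi hj ⊢
  push_cast
  linear_combination hi + hj

end FeatureMap

lemma kapTilde_eq_tsum_expWeight (d : ℕ) (p τ : ℝ) : kapTilde d p τ = ∑' k, expWeight d p τ k :=
  rfl

lemma kapTilde_pos (d : ℕ) {p τ : ℝ} (hτ : 0 < τ) (hp : 0 < p) : 0 < kapTilde d p τ :=
  (summable_expWeight d hτ hp).tsum_pos (fun k => (expWeight_pos k).le) 0 (expWeight_pos 0)

theorem selfadjoint_operator_expectation_general (d : ℕ) (p τ : ℝ)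
    (hp : p ∈ Set.Ioo (0 : ℝ) 1) (hτ : 0 < τ)
    (ft : (Fin d → ℤ) → ℂ) (B : ℝ) (hB : ∀ j, ‖ft j‖ ≤ B)
    (x : Fin d → ℝ) :
    Summable (fun ij : (Fin d → ℤ) × (Fin d → ℤ) =>
      ‖(starRingEnd ℂ) (psiD d p τ ij.1 x) * psiD d p τ ij.2 x *
        ((cstD d p τ ij.1 (ij.2 - ij.1) + cstD d p τ ij.2 (ij.1 - ij.2) : ℝ) : ℂ) *
        ft (ij.2 - ij.1)‖) ∧
    (∑' j : Fin d → ℤ, ft j * psiD d p τ j x)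
      = (1 / (2 * (kapTilde d p τ : ℂ))) *
          ∑' ij : (Fin d → ℤ) × (Fin d → ℤ),
            (starRingEnd ℂ) (psiD d p τ ij.1 x) * psiD d p τ ij.2 x *
              ((cstD d p τ ij.1 (ij.2 - ij.1) + cstD d p τ ij.2 (ij.1 - ij.2) : ℝ) : ℂ) *
              ft (ij.2 - ij.1) := by
  set a : (Fin d → ℤ) → ℂ := fun k => expWeight d p τ k
  set f : (Fin d → ℤ) → ℂ := fun k => ft k * psiD d p τ k x
  have ha : Summable (‖a ·‖) := by
    simpa [a, abs_of_pos (expWeight_pos _)] using summable_expWeight d hτ hp.1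
  have hf : Summable (‖f ·‖) :=
    ((summable_expWeight d (half_pos hτ) hp.1).mul_left B).of_nonneg_of_le (fun _ => norm_nonneg _)
      fun k => by
        rw [norm_mul, norm_psiD]
        exact mul_le_mul_of_nonneg_right (hB k) (expWeight_pos _).le
  have hsummand (q : (Fin d → ℤ) × (Fin d → ℤ)) :
      (starRingEnd ℂ) (psiD d p τ q.1 x) * psiD d p τ q.2 x *
          ((cstD d p τ q.1 (q.2 - q.1) + cstD d p τ q.2 (q.1 - q.2) : ℝ) : ℂ) * ft (q.2 - q.1)
        = a q.1 * f (q.2 - q.1) + a q.2 * f (q.2 - q.1) := by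
    rw [conj_psiD_mul_psiD_mul_cstD]
    ring
  have hκ : (kapTilde d p τ : ℂ) ≠ 0 := Complex.ofReal_ne_zero.mpr (kapTilde_pos d hτ hp.1).ne'
  have hleft := summable_norm_mul_comp_sub_left ha hf
  have hright := summable_norm_mul_comp_sub_right ha hf
  simp only [hsummand]
  refine ⟨(hleft.add hright).of_nonneg_of_le (fun _ => norm_nonneg _) fun _ => norm_add_le _ _, ?_⟩
  rw [hleft.of_norm.tsum_add hright.of_norm, tsum_mul_comp_sub_left ha hf,
    tsum_mul_comp_sub_right ha hf, ← Complex.ofReal_tsum, ← kapTilde_eq_tsum_expWeight]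
  field_simp
  ring

/-- For bounded coefficients `(f̃_j)` with `conj f̃_j = f̃_{−j}` (so that
`f = Σ_j f̃_j ψ_j` is real-valued), the double family
`(ψ_i^*(x) ψ_j(x)(c_{i,j−i}+c_{j,i−j}) f̃_{j−i})` is absolutely summable and
`f(x) = (1/(2κ̃)) Σ_{(i,j)} ψ_i^*(x) ψ_j(x)(c_{i,j−i}+c_{j,i−j}) f̃_{j−i}`. -/
theorem selfadjoint_operator_expectation (d : ℕ) (hd : 1 ≤ d) (p τ : ℝ)
    (hp : p ∈ Set.Ioo (0 : ℝ) 1) (hτ : 0 < τ)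
    (ft : (Fin d → ℤ) → ℂ) (B : ℝ) (hB : ∀ j, ‖ft j‖ ≤ B)
    (hconj : ∀ j, (starRingEnd ℂ) (ft j) = ft (-j)) (x : Fin d → ℝ) :
    Summable (fun ij : (Fin d → ℤ) × (Fin d → ℤ) =>
      ‖(starRingEnd ℂ) (psiD d p τ ij.1 x) * psiD d p τ ij.2 x *
        ((cstD d p τ ij.1 (ij.2 - ij.1) + cstD d p τ ij.2 (ij.1 - ij.2) : ℝ) : ℂ) *
        ft (ij.2 - ij.1)‖) ∧
    (∑' j : Fin d → ℤ, ft j * psiD d p τ j x)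
      = (1 / (2 * (kapTilde d p τ : ℂ))) *
          ∑' ij : (Fin d → ℤ) × (Fin d → ℤ),
            (starRingEnd ℂ) (psiD d p τ ij.1 x) * psiD d p τ ij.2 x *
              ((cstD d p τ ij.1 (ij.2 - ij.1) + cstD d p τ ij.2 (ij.1 - ij.2) : ℝ) : ℂ) *
              ft (ij.2 - ij.1) :=
  selfadjoint_operator_expectation_general d p τ hp hτ ft B hB x

end QECD
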